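/- Let k be a field of characteristic p > 0, n ≥ 1, and let B, Ψ be n×n matrices over k[[z]] such that D_B^p = 0 and Ψ′ = Ψ·B − B·Ψ. Then there exist an invertible n×n matrix U over k[[z]] and an n×n matrix Ψ₀ over k[[z]] such that U′ + B·U = 0, Ψ₀′ = 0 (every entry of Ψ₀ has zero derivative), and Ψ = U·Ψ₀·U⁻¹. (This is the local content of the equations (phe): a connection with vanishing p-curvature together with a horizontal F-Higgs field descends along the Frobenius to a Higgs field; it is the local heart of the inverse of the correspondence 𝔠 in the paper's main theorem.) -/

import Mathlib

/-!
Katz's formula: for `v ∈ k⟦z⟧ⁿ` the truncated sum `Σ_{m<p} (-z)^m/m! · D_B^m v` telescopes under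
`D_B` to `(-z)^{p-1}/(p-1)! · D_B^p v = 0`, so it is horizontal; applied to the standard basis it
gives a fundamental matrix `U` with `U(0) = 1`, hence invertible. Horizontality of `Ψ` says exactly
that `Ψ₀ = U⁻¹ Ψ U` has zero derivative.
-/

open PowerSeries

/-- The formal derivative `d/dz` on `k⟦z⟧`. -/
noncomputable def pd (k : Type*) [CommRing k] (f : PowerSeries k) : PowerSeries k :=
  PowerSeries.derivative k f

/-- Entrywise formal derivative of a matrix over `k⟦z⟧`. -/
noncomputable def matD (k : Type*) [CommRing k] {n : ℕ}
    (B : Matrix (Fin n) (Fin n) (PowerSeries k)) : Matrix (Fin n) (Fin n) (PowerSeries k) :=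
  fun i j => pd k (B i j)

/-- The connection operator `D_B = d/dz + B` acting on `k⟦z⟧ⁿ`: `D_B(v) = v′ + B·v`. -/
noncomputable def connOp (k : Type*) [CommRing k] {n : ℕ}
    (B : Matrix (Fin n) (Fin n) (PowerSeries k)) :
    (Fin n → PowerSeries k) → (Fin n → PowerSeries k) :=
  fun v => (fun i => pd k (v i)) + B.mulVec v

open Finset
open scoped Nat

section Connection

variable {k : Type*} [CommRing k] {n : ℕ}

lemma pd_mul (f g : k⟦X⟧) : pd k (f * g) = pd k f * g + f * pd k g := by
  simp only [pd, Derivation.leibniz, smul_eq_mul]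
  ring

lemma matD_mul (A C : Matrix (Fin n) (Fin n) k⟦X⟧) :
    matD k (A * C) = matD k A * C + A * matD k C := by
  funext i j
  simp only [matD, Matrix.mul_apply, Matrix.add_apply, pd, map_sum, ← sum_add_distrib]
  exact sum_congr rfl fun l _ => pd_mul _ _

lemma matD_one : matD k (1 : Matrix (Fin n) (Fin n) k⟦X⟧) = 0 := by
  ext i j
  rw [matD, Matrix.one_apply]
  split_ifs <;> simp [pd]

lemma matD_nonsing_inv {U : Matrix (Fin n) (Fin n) k⟦X⟧} (hU : IsUnit U.det) :
    matD k U⁻¹ = -(U⁻¹ * matD k U * U⁻¹) := by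
  have h : matD k U⁻¹ * U + U⁻¹ * matD k U = 0 := by
    rw [← matD_mul, Matrix.nonsing_inv_mul U hU, matD_one]
  calc matD k U⁻¹ = matD k U⁻¹ * U * U⁻¹ := (Matrix.mul_nonsing_inv_cancel_right U _ hU).symm
    _ = -(U⁻¹ * matD k U * U⁻¹) := by rw [eq_neg_of_add_eq_zero_left h, Matrix.neg_mul]

lemma matD_conj_eq_zero {B Ψ U : Matrix (Fin n) (Fin n) k⟦X⟧} (hU : IsUnit U.det)
    (hUB : matD k U + B * U = 0) (hΨ : matD k Ψ = Ψ * B - B * Ψ) :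
    matD k (U⁻¹ * Ψ * U) = 0 := by
  have hU' : matD k U = -(B * U) := eq_neg_of_add_eq_zero_left hUB
  have hUinv : matD k U⁻¹ = U⁻¹ * B := by
    rw [matD_nonsing_inv hU, hU']
    simp [Matrix.mul_assoc, hU]
  rw [matD_mul, matD_mul, hUinv, hU', hΨ]
  noncomm_ring

lemma connOp_add (B : Matrix (Fin n) (Fin n) k⟦X⟧) (v w : Fin n → k⟦X⟧) :
    connOp k B (v + w) = connOp k B v + connOp k B w := by
  ext i : 1
  simp only [connOp, pd, Pi.add_apply, map_add, Matrix.mulVec_add]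
  ring

lemma connOp_smul (B : Matrix (Fin n) (Fin n) k⟦X⟧) (f : k⟦X⟧) (v : Fin n → k⟦X⟧) :
    connOp k B (f • v) = pd k f • v + f • connOp k B v := by
  ext i : 1
  simp only [connOp, Pi.add_apply, Pi.smul_apply, smul_eq_mul, Matrix.mulVec_smul, pd_mul]
  ring

lemma connOp_col (B U : Matrix (Fin n) (Fin n) k⟦X⟧) (j : Fin n) :
    connOp k B (fun i => U i j) = fun i => (matD k U + B * U) i j := by
  ext i : 1
  simp [connOp, matD, Matrix.mul_apply, Matrix.mulVec, dotProduct]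

lemma isUnit_det_iff_map_constantCoeff (U : Matrix (Fin n) (Fin n) k⟦X⟧) :
    IsUnit U.det ↔ IsUnit (U.map constantCoeff).det := by
  rw [isUnit_iff_constantCoeff, RingHom.map_det]
  rfl

end Connection

section Katz

variable {k : Type*} [Field k] {n : ℕ}

-- In characteristic `p`, `(m ! : k)⁻¹` is the junk value `0` for `m ≥ p`; the lemmas below assume
-- `(m ! : k) ≠ 0`.
noncomputable def negExpTerm (k : Type*) [Field k] (m : ℕ) : k⟦X⟧ :=
  C (m ! : k)⁻¹ * (-X) ^ m

lemma negExpTerm_zero : negExpTerm k 0 = 1 := by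
  simp [negExpTerm]

lemma constantCoeff_negExpTerm_succ (m : ℕ) : constantCoeff (negExpTerm k (m + 1)) = 0 := by
  simp [negExpTerm, pow_succ]

lemma pd_negExpTerm_succ {m : ℕ} (hm : ((m + 1)! : k) ≠ 0) :
    pd k (negExpTerm k (m + 1)) = -negExpTerm k m := by
  have hm' : ((m + 1 : ℕ) : k) ≠ 0 :=
    ne_zero_of_dvd_ne_zero hm (Nat.cast_dvd_cast (Nat.dvd_factorial m.succ_pos le_rfl))
  have hfac : ((m + 1)! : k)⁻¹ * (m + 1 : ℕ) = (m ! : k)⁻¹ := by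
    rw [Nat.factorial_succ, Nat.cast_mul, mul_inv, mul_comm, ← mul_assoc, mul_inv_cancel₀ hm',
      one_mul]
  simp only [negExpTerm, pd, Derivation.leibniz, derivative_C, derivative_pow, map_neg,
    derivative_X, smul_eq_mul, Nat.add_sub_cancel]
  rw [← hfac, map_mul, map_natCast]
  ring

noncomputable def katzSection (B : Matrix (Fin n) (Fin n) k⟦X⟧) (N : ℕ) (v : Fin n → k⟦X⟧) :
    Fin n → k⟦X⟧ :=
  ∑ m ∈ range (N + 1), negExpTerm k m • (connOp k B)^[m] v

lemma connOp_katzSection (B : Matrix (Fin n) (Fin n) k⟦X⟧) {N : ℕ} (hN : (N ! : k) ≠ 0)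
    (v : Fin n → k⟦X⟧) :
    connOp k B (katzSection B N v) = negExpTerm k N • (connOp k B)^[N + 1] v := by
  induction N with
  | zero =>
    simp [katzSection, negExpTerm_zero]
  | succ N ih =>
    have hN' : (N ! : k) ≠ 0 :=
      ne_zero_of_dvd_ne_zero hN (Nat.cast_dvd_cast (Nat.factorial_dvd_factorial N.le_succ))
    rw [katzSection, sum_range_succ, connOp_add, ← katzSection, ih hN', connOp_smul,
      pd_negExpTerm_succ hN, ← Function.iterate_succ_apply' (connOp k B), neg_smul,
      add_neg_cancel_left]

lemma constantCoeff_katzSection (B : Matrix (Fin n) (Fin n) k⟦X⟧) (N : ℕ) (v : Fin n → k⟦X⟧)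
    (i : Fin n) : constantCoeff (katzSection B N v i) = constantCoeff (v i) := by
  simp [katzSection, sum_range_succ', constantCoeff_negExpTerm_succ, negExpTerm_zero]

lemma connOp_katzSection_eq_zero {p : ℕ} [Fact p.Prime] [CharP k p]
    (B : Matrix (Fin n) (Fin n) k⟦X⟧) {v : Fin n → k⟦X⟧} (hv : (connOp k B)^[p] v = 0) :
    connOp k B (katzSection B (p - 1) v) = 0 := by
  have hp : p.Prime := Fact.out
  have hfac : ((p - 1)! : k) ≠ 0 := by
    rw [Ne, CharP.cast_eq_zero_iff k p, hp.dvd_factorial, not_le]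
    exact Nat.sub_one_lt hp.ne_zero
  rw [connOp_katzSection B hfac, Nat.sub_add_cancel hp.one_lt.le, hv, smul_zero]

lemma exists_fundamental_matrix {p : ℕ} [Fact p.Prime] [CharP k p]
    (B : Matrix (Fin n) (Fin n) k⟦X⟧) (hB : ∀ v : Fin n → k⟦X⟧, (connOp k B)^[p] v = 0) :
    ∃ U : Matrix (Fin n) (Fin n) k⟦X⟧, IsUnit U.det ∧ matD k U + B * U = 0 := by
  let U : Matrix (Fin n) (Fin n) k⟦X⟧ := .of fun i j => katzSection B (p - 1) (Pi.single j 1) i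
  refine ⟨U, ?_, ?_⟩
  · have hU0 : U.map constantCoeff = 1 := by
      ext i j
      simp [U, constantCoeff_katzSection, Matrix.one_apply, Pi.single_apply]
    rw [isUnit_det_iff_map_constantCoeff, hU0, Matrix.det_one]
    exact isUnit_one
  · funext i j
    exact congrFun ((connOp_col B U j).symm.trans (connOp_katzSection_eq_zero B (hB _))) i

end Katz

theorem higgs_descent_local_general (k : Type*) [Field k] (p : ℕ) [Fact p.Prime] [CharP k p]
    (n : ℕ) (B Ψ : Matrix (Fin n) (Fin n) (PowerSeries k))
    (hB : ∀ v : Fin n → PowerSeries k, (connOp k B)^[p] v = 0)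
    (hΨ : matD k Ψ = Ψ * B - B * Ψ) :
    ∃ (U Ψ₀ : Matrix (Fin n) (Fin n) (PowerSeries k)),
      IsUnit U.det ∧ matD k U + B * U = 0 ∧ matD k Ψ₀ = 0 ∧ Ψ = U * Ψ₀ * U⁻¹ := by
  obtain ⟨U, hU, hUB⟩ := exists_fundamental_matrix B hB
  refine ⟨U, U⁻¹ * Ψ * U, hU, hUB, matD_conj_eq_zero hU hUB hΨ, ?_⟩
  rw [← Matrix.mul_assoc, Matrix.mul_nonsing_inv_cancel_right U _ hU,
    Matrix.mul_nonsing_inv_cancel_left U _ hU]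

/-- A connection `d/dz + B` with vanishing `p`-curvature together with a horizontal
`F`-Higgs field `Ψ` descends along the Frobenius: there are an invertible `U` with
`U′ + B·U = 0` and a constant matrix `Ψ₀` (entrywise zero derivative) with
`Ψ = U·Ψ₀·U⁻¹`. -/
theorem higgs_descent_local (k : Type*) [Field k] (p : ℕ) [Fact p.Prime] [CharP k p]
    (n : ℕ) (hn : 1 ≤ n) (B Ψ : Matrix (Fin n) (Fin n) (PowerSeries k))
    (hB : ∀ v : Fin n → PowerSeries k, (connOp k B)^[p] v = 0)
    (hΨ : matD k Ψ = Ψ * B - B * Ψ) :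
    ∃ (U Ψ₀ : Matrix (Fin n) (Fin n) (PowerSeries k)),
      IsUnit U.det ∧ matD k U + B * U = 0 ∧ matD k Ψ₀ = 0 ∧ Ψ = U * Ψ₀ * U⁻¹ :=
  higgs_descent_local_general k p n B Ψ hB hΨ
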